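/- arXiv:2306.07774 — 3 statements merged into one kernel-verified Lean document; each statement's English description precedes it below -/
import Mathlib

section
/- Let D ∈ ℝ^{r×r} be diagonal and V ∈ ℝ^{m×r} have orthonormal columns. Then V D² V* + I_m is invertible and for every e ∈ ℝ^m, e* (V D² V* + I)^{-1} e = ‖e‖² − e* V D (D² + I)^{-1} D V* e. -/
open Matrix BigOperators

namespace Matrix

variable {m r R : Type*} [Fintype m] [Fintype r] [DecidableEq m] [DecidableEq r] [CommRing R]

/-- Woodbury-type inversion: `W * V = 1` reduces inverting `V D² W + 1` to inverting the
small matrix `D² + 1`. -/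
theorem mul_sq_mul_add_one_mul_one_sub {V : Matrix m r R} {W : Matrix r m R} {D : Matrix r r R}
    (hWV : W * V = 1) (hD : IsUnit (D ^ 2 + 1).det) :
    (V * D ^ 2 * W + 1) * (1 - V * D * (D ^ 2 + 1)⁻¹ * D * W) = 1 := by
  have hsmall : D ^ 2 * (D * (D ^ 2 + 1)⁻¹ * D) + D * (D ^ 2 + 1)⁻¹ * D = D ^ 2 := by
    calc _ = D * ((D ^ 2 + 1) * (D ^ 2 + 1)⁻¹) * D := by noncomm_ring
      _ = D ^ 2 := by rw [mul_nonsing_inv _ hD, Matrix.mul_one, sq]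
  calc (V * D ^ 2 * W + 1) * (1 - V * D * (D ^ 2 + 1)⁻¹ * D * W)
      = V * D ^ 2 * W + 1 - V * D ^ 2 * (W * V) * (D * (D ^ 2 + 1)⁻¹ * D) * W
          - V * (D * (D ^ 2 + 1)⁻¹ * D) * W := by
        simp only [Matrix.mul_sub, Matrix.add_mul, Matrix.mul_one, Matrix.one_mul, Matrix.mul_assoc]
        abel
    _ = V * D ^ 2 * W + 1
          - V * (D ^ 2 * (D * (D ^ 2 + 1)⁻¹ * D) + D * (D ^ 2 + 1)⁻¹ * D) * W := by
        rw [hWV, Matrix.mul_one]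
        simp only [Matrix.mul_add, Matrix.add_mul, Matrix.mul_assoc]
        abel
    _ = 1 := by rw [hsmall]; abel

theorem IsDiag.isUnit_det_sq_add_one {𝕜 : Type*} [Field 𝕜] [LinearOrder 𝕜] [IsStrictOrderedRing 𝕜]
    {D : Matrix r r 𝕜} (hD : D.IsDiag) : IsUnit (D ^ 2 + 1).det := by
  rw [← hD.diagonal_diag, diagonal_pow, ← diagonal_one, diagonal_add, det_diagonal]
  exact (Finset.prod_pos fun k _ => by rw [Pi.pow_apply]; positivity).ne'.isUnit

end Matrix

theorem quadform_inv_add_one_general {m r : ℕ}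
    (V : Matrix (Fin m) (Fin r) ℝ) (D : Matrix (Fin r) (Fin r) ℝ)
    (hV : Vᵀ * V = 1) (hD : D.IsDiag) (e : Fin m → ℝ) :
    IsUnit (V * D ^ 2 * Vᵀ + 1).det ∧
      e ⬝ᵥ (V * D ^ 2 * Vᵀ + 1)⁻¹ *ᵥ e =
        e ⬝ᵥ e - e ⬝ᵥ (V * D * (D ^ 2 + 1)⁻¹ * D * Vᵀ) *ᵥ e := by
  have hinv := mul_sq_mul_add_one_mul_one_sub hV hD.isUnit_det_sq_add_one
  refine ⟨isUnit_det_of_right_inverse hinv, ?_⟩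
  rw [inv_eq_right_inv hinv, sub_mulVec, one_mulVec, dotProduct_sub]

/-- If `D` is diagonal with nonnegative entries and `V` has orthonormal columns, then
`V D² Vᵀ + I` is invertible and the quadratic form of its inverse satisfies
`eᵀ (V D² Vᵀ + I)⁻¹ e = ‖e‖² − eᵀ V D (D² + I)⁻¹ D Vᵀ e`. -/
theorem quadform_inv_add_one {m r : ℕ}
    (V : Matrix (Fin m) (Fin r) ℝ) (D : Matrix (Fin r) (Fin r) ℝ)
    (hV : Vᵀ * V = 1) (hD : D.IsDiag) (hDpos : ∀ k, 0 ≤ D k k) (e : Fin m → ℝ) :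
    IsUnit (V * D ^ 2 * Vᵀ + 1).det ∧
      e ⬝ᵥ (V * D ^ 2 * Vᵀ + 1)⁻¹ *ᵥ e =
        e ⬝ᵥ e - e ⬝ᵥ (V * D * (D ^ 2 + 1)⁻¹ * D * Vᵀ) *ᵥ e :=
  quadform_inv_add_one_general V D hV hD e
end

section
/- With the setup of the low-rank update (Π^{1/2} ∈ ℝ^{n×r}, (R^{-1/2} C Π^{1/2})* = U D V* thin SVD, U ∈ ℝ^{r×r} orthogonal, D diagonal, V*V = I_r), define K = Π^{1/2} U (I + D²)^{-1} D V* R^{-1/2} and S = R^{1/2}(V D² V* + I)R^{*/2}. Then K equals the Kalman gain Π^{1/2}(C Π^{1/2})* S^{-1} where Π = Π^{1/2} Π^{*/2}. -/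
open Matrix

/-- With the low-rank update setup, `K = Π^{1/2} U (I + D²)⁻¹ D Vᵀ R^{-1/2}`
equals the Kalman gain `Π Cᵀ S⁻¹` where `Π = Π^{1/2} Π^{*/2}` and
`S = R^{1/2} (V D² Vᵀ + I) R^{*/2}`. -/
theorem low_rank_kalman_gain {n m r : ℕ}
    (Ph : Matrix (Fin n) (Fin r) ℝ) (C : Matrix (Fin m) (Fin n) ℝ)
    (Rh : Matrix (Fin m) (Fin m) ℝ)
    (U D : Matrix (Fin r) (Fin r) ℝ) (V : Matrix (Fin m) (Fin r) ℝ)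
    (hRh : IsUnit Rh.det)
    (hU₁ : U * Uᵀ = 1) (hU₂ : Uᵀ * U = 1) (hD : D.IsDiag) (hV : Vᵀ * V = 1)
    (hSVD : (Rh⁻¹ * C * Ph)ᵀ = U * D * Vᵀ) :
    Ph * U * (1 + D ^ 2)⁻¹ * D * Vᵀ * Rh⁻¹ =
      (Ph * Phᵀ) * Cᵀ * (Rh * (V * D ^ 2 * Vᵀ + 1) * Rhᵀ)⁻¹ := by
  have hDT : Dᵀ = D := by
    ext i j
    rcases eq_or_ne i j with h | h
    · subst h; rfl
    · rw [transpose_apply, hD h.symm, hD h]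
  set M : Matrix (Fin r) (Fin r) ℝ := 1 + D ^ 2 with hMdef
  have hMpd : M.PosDef := by
    have h1 : D ^ 2 = Dᴴ * D := by
      rw [conjTranspose_eq_transpose_of_trivial, hDT, sq]
    rw [hMdef, h1]
    exact Matrix.PosDef.one.add_posSemidef (posSemidef_conjTranspose_mul_self D)
  have hM : IsUnit M.det := hMpd.det_pos.ne'.isUnit
  have hMM : M⁻¹ * M = 1 := nonsing_inv_mul M hM
  have hMM' : M * M⁻¹ = 1 := mul_nonsing_inv M hM
  have hcomm2 : M * D ^ 2 = D ^ 2 * M := by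
    rw [hMdef, add_mul, mul_add, one_mul, mul_one]
  have hcomm : D * M = M * D := by
    rw [hMdef, mul_add, add_mul, mul_one, one_mul, pow_succ, pow_one, ← mul_assoc]
  have hcomm' : M⁻¹ * D = D * M⁻¹ := by
    have h3 : M⁻¹ * (D * M) * M⁻¹ = M⁻¹ * D := by
      rw [← Matrix.mul_assoc, Matrix.mul_assoc (M⁻¹ * D) M M⁻¹, hMM', mul_one]
    calc M⁻¹ * D = M⁻¹ * (D * M) * M⁻¹ := h3.symm
    _ = M⁻¹ * (M * D) * M⁻¹ := by rw [hcomm]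
    _ = D * M⁻¹ := by rw [← Matrix.mul_assoc, hMM, one_mul]
  set X : Matrix (Fin r) (Fin r) ℝ := D ^ 2 * M⁻¹ with hXdef
  have hMX : M * X = D ^ 2 := by
    rw [hXdef, ← Matrix.mul_assoc, hcomm2, Matrix.mul_assoc, hMM', mul_one]
  set T : Matrix (Fin m) (Fin m) ℝ := V * D ^ 2 * Vᵀ + 1 with hTdef
  have hVV : ∀ (A B : Matrix (Fin r) (Fin r) ℝ),
      V * A * Vᵀ * (V * B * Vᵀ) = V * (A * B) * Vᵀ := by
    intro A B
    calc V * A * Vᵀ * (V * B * Vᵀ) = V * A * (Vᵀ * V) * (B * Vᵀ) := by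
          simp only [Matrix.mul_assoc]
    _ = V * (A * B) * Vᵀ := by rw [hV, Matrix.mul_one]; simp only [Matrix.mul_assoc]
  have hTinv : T⁻¹ = 1 - V * X * Vᵀ := by
    apply inv_eq_right_inv
    have h2 : T * (V * X * Vᵀ) = V * (D ^ 2) * Vᵀ := by
      rw [hTdef, Matrix.add_mul, Matrix.one_mul, hVV, ← Matrix.add_mul, ← Matrix.mul_add]
      congr 2
      calc D ^ 2 * X + X = (D ^ 2 + 1) * X := by rw [add_mul, one_mul]
      _ = M * X := by rw [hMdef, add_comm]
      _ = D ^ 2 := hMX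
    rw [Matrix.mul_sub, Matrix.mul_one, h2, hTdef, add_sub_cancel_left]
  -- relation from the SVD
  have hRR : Rh * Rh⁻¹ = 1 := mul_nonsing_inv Rh hRh
  have hRhT : IsUnit Rhᵀ.det := by rwa [det_transpose]
  have hRT : Rhᵀ * (Rhᵀ)⁻¹ = 1 := mul_nonsing_inv _ hRhT
  have h1 : Rh⁻¹ * C * Ph = V * D * Uᵀ := by
    have h0 := congrArg transpose hSVD
    simpa [transpose_mul, hDT, Matrix.mul_assoc] using h0
  have h2 : C * Ph = Rh * (V * D * Uᵀ) := by
    rw [← h1, ← Matrix.mul_assoc, ← Matrix.mul_assoc, hRR, Matrix.one_mul]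
  have hCP : Phᵀ * Cᵀ = U * D * Vᵀ * Rhᵀ := by
    calc Phᵀ * Cᵀ = (C * Ph)ᵀ := (transpose_mul C Ph).symm
    _ = (Rh * (V * D * Uᵀ))ᵀ := by rw [h2]
    _ = U * D * Vᵀ * Rhᵀ := by simp [transpose_mul, hDT, Matrix.mul_assoc]
  have hDX : D - D * X = M⁻¹ * D := by
    calc D - D * X = D * (M * M⁻¹) - D * X := by rw [hMM', mul_one]
    _ = D * ((M - D ^ 2) * M⁻¹) := by rw [Matrix.sub_mul, Matrix.mul_sub, hXdef]
    _ = D * M⁻¹ := by rw [hMdef, add_sub_cancel_right, one_mul]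
    _ = M⁻¹ * D := hcomm'.symm
  have hVW : Vᵀ * (1 - V * (X * Vᵀ)) = Vᵀ - X * Vᵀ := by
    rw [Matrix.mul_sub, Matrix.mul_one]
    congr 1
    calc Vᵀ * (V * (X * Vᵀ)) = Vᵀ * V * (X * Vᵀ) := (Matrix.mul_assoc Vᵀ V (X * Vᵀ)).symm
    _ = X * Vᵀ := by rw [hV, Matrix.one_mul]
  have key2 : D * (Vᵀ * ((1 - V * (X * Vᵀ)) * Rh⁻¹)) = M⁻¹ * (D * (Vᵀ * Rh⁻¹)) := by
    calc D * (Vᵀ * ((1 - V * (X * Vᵀ)) * Rh⁻¹))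
        = D * (Vᵀ * (1 - V * (X * Vᵀ))) * Rh⁻¹ := by simp only [Matrix.mul_assoc]
    _ = D * (Vᵀ - X * Vᵀ) * Rh⁻¹ := by rw [hVW]
    _ = (D - D * X) * Vᵀ * Rh⁻¹ := by
        simp only [Matrix.mul_sub, Matrix.sub_mul, Matrix.mul_assoc]
    _ = M⁻¹ * D * Vᵀ * Rh⁻¹ := by rw [hDX]
    _ = M⁻¹ * (D * (Vᵀ * Rh⁻¹)) := by simp only [Matrix.mul_assoc]
  have hSinv : (Rh * T * Rhᵀ)⁻¹ = (Rhᵀ)⁻¹ * (T⁻¹ * Rh⁻¹) := by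
    rw [Matrix.mul_inv_rev, Matrix.mul_inv_rev]
  rw [hSinv, hTinv, Matrix.mul_assoc Ph Phᵀ Cᵀ, hCP]
  simp only [Matrix.mul_assoc]
  rw [← Matrix.mul_assoc Rhᵀ (Rhᵀ)⁻¹, hRT, one_mul, key2]
end

section
/- With the same setup, the posterior covariance Σ = Π − K S K* (with K the Kalman gain and S = C Π C* + R) satisfies Σ = Π^{1/2} U (I + D²)^{-1} U* Π^{*/2}. In particular Σ^{1/2} := Π^{1/2} U (I + D²)^{-1/2} is a square-root factor of Σ and has rank at most r. -/
open Matrix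

/-
With `B = R⁻¹ C Π^{1/2}` one has `S = R (1 + B Bᵀ) Rᵀ`, so the Kalman update collapses to
`Σ = Π^{1/2} (1 - Bᵀ (1 + B Bᵀ)⁻¹ B) Π^{*/2}`, which is `Π^{1/2} (1 + Bᵀ B)⁻¹ Π^{*/2}` by the
Woodbury identity. The SVD gives `Bᵀ B = U D² Uᵀ`, and conjugation by the orthogonal `U` commutes
with inversion. Since `(1 + D²)⁻¹` is diagonal with positive entries, it has the square root
`(1 + D²)^{-1/2}`, and `Σ = Σ^{1/2} Σ^{*/2}` has the rank of the `n × r` matrix `Σ^{1/2}`.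
-/

namespace Matrix

theorem isUnit_one_add_mul_transpose_self {m n : Type*} [Fintype m] [Fintype n] [DecidableEq m]
    (B : Matrix m n ℝ) : IsUnit (1 + B * Bᵀ) := by
  have h := PosDef.one.add_posSemidef (posSemidef_self_mul_conjTranspose B)
  rw [conjTranspose_eq_transpose_of_trivial] at h
  exact h.isUnit

variable {α : Type*} [CommRing α]

theorem inv_one_add_mul_eq_one_sub {m n : Type*} [Fintype m] [Fintype n] [DecidableEq m]
    [DecidableEq n] (A : Matrix m n α) (B : Matrix n m α) (h : IsUnit (1 + B * A)) :
    (1 + A * B)⁻¹ = 1 - A * (1 + B * A)⁻¹ * B := by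
  simpa using add_mul_mul_inv_eq_sub 1 A 1 B isUnit_one isUnit_one (by simpa using h)

theorem inv_one_add_conj_orthogonal {n : Type*} [Fintype n] [DecidableEq n] {U : Matrix n n α}
    (hU₁ : U * Uᵀ = 1) (hU₂ : Uᵀ * U = 1) (X : Matrix n n α) :
    (1 + U * X * Uᵀ)⁻¹ = U * (1 + X)⁻¹ * Uᵀ := by
  have hconj : 1 + U * X * Uᵀ = U * (1 + X) * Uᵀ := by
    rw [Matrix.mul_add, Matrix.add_mul, Matrix.mul_one, hU₁]
  rw [hconj, mul_inv_rev, mul_inv_rev, inv_eq_left_inv hU₂, inv_eq_left_inv hU₁,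
    Matrix.mul_assoc]

theorem svd_mul_transpose {m n : Type*} [Fintype m] [Fintype n] [DecidableEq n]
    {U D : Matrix n n α} {V : Matrix m n α} (hV : Vᵀ * V = 1) :
    U * D * Vᵀ * (U * D * Vᵀ)ᵀ = U * (D * Dᵀ) * Uᵀ := by
  simp only [transpose_mul, transpose_transpose, Matrix.mul_assoc]
  rw [← Matrix.mul_assoc Vᵀ, hV, Matrix.one_mul]

theorem mul_inv_mul_mul_transpose_of_transpose_eq {m n : Type*} [Fintype n] [DecidableEq n]
    {S : Matrix n n α} (hS : IsUnit S.det) (hST : Sᵀ = S) (X : Matrix m n α) :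
    X * S⁻¹ * S * (X * S⁻¹)ᵀ = X * S⁻¹ * Xᵀ := by
  rw [nonsing_inv_mul_cancel_right _ _ hS, transpose_mul, transpose_nonsing_inv, hST,
    ← Matrix.mul_assoc]

theorem transpose_mul_inv_mul_mul_transpose_mul {n : Type*} [Fintype n] [DecidableEq n]
    {R : Matrix n n α} (hR : IsUnit R.det) (M : Matrix n n α) :
    Rᵀ * (R * M * Rᵀ)⁻¹ * R = M⁻¹ := by
  have hRT : IsUnit Rᵀ.det := by rwa [det_transpose]
  rw [mul_inv_rev, mul_inv_rev, ← Matrix.mul_assoc, mul_nonsing_inv _ hRT, Matrix.one_mul,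
    Matrix.mul_assoc, nonsing_inv_mul _ hR, Matrix.mul_one]

theorem kalman_posterior_cov_eq {l m n : Type*} [Fintype l] [Fintype m] [Fintype n]
    [DecidableEq l] [DecidableEq n] (L : Matrix m l α) (C : Matrix n m α) {R : Matrix n n α}
    {B : Matrix n l α} (hR : IsUnit R.det) (hB : IsUnit (1 + B * Bᵀ)) (hCL : C * L = R * B) :
    let P := L * Lᵀ
    let S := C * P * Cᵀ + R * Rᵀ
    let K := P * Cᵀ * S⁻¹
    P - K * S * Kᵀ = L * (1 + Bᵀ * B)⁻¹ * Lᵀ := by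
  intro P S K
  have hCPC : C * P * Cᵀ = R * (B * Bᵀ) * Rᵀ := by
    rw [show C * P * Cᵀ = C * L * (C * L)ᵀ by simp only [P, transpose_mul, Matrix.mul_assoc],
      hCL, transpose_mul]
    simp only [Matrix.mul_assoc]
  have hS : S = R * (1 + B * Bᵀ) * Rᵀ := by
    simp only [S, hCPC, Matrix.mul_add, Matrix.add_mul, Matrix.mul_one, add_comm]
  have hSdet : IsUnit S.det := by
    rw [hS, det_mul, det_mul, det_transpose]
    exact (hR.mul ((isUnit_iff_isUnit_det _).mp hB)).mul hR
  have hST : Sᵀ = S := by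
    rw [hS]
    simp only [transpose_mul, transpose_add, transpose_one, transpose_transpose, Matrix.mul_assoc]
  have hPC : P * Cᵀ = L * Bᵀ * Rᵀ := by
    rw [show P * Cᵀ = L * (C * L)ᵀ by simp only [P, transpose_mul, Matrix.mul_assoc], hCL,
      transpose_mul, Matrix.mul_assoc]
  calc P - K * S * Kᵀ = L * Lᵀ - L * Bᵀ * (Rᵀ * S⁻¹ * R) * B * Lᵀ := by
        rw [mul_inv_mul_mul_transpose_of_transpose_eq hSdet hST, hPC]
        simp only [P, transpose_mul, transpose_transpose, Matrix.mul_assoc]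
    _ = L * (1 - Bᵀ * (1 + B * Bᵀ)⁻¹ * B) * Lᵀ := by
        rw [hS, transpose_mul_inv_mul_mul_transpose_mul hR]
        simp only [Matrix.mul_sub, Matrix.sub_mul, Matrix.mul_one, Matrix.mul_assoc]
    _ = L * (1 + Bᵀ * B)⁻¹ * Lᵀ := by
        rw [inv_one_add_mul_eq_one_sub _ _ hB]

theorem diagonal_inv_sqrt_one_add_sq_mul_transpose {n : Type*} [Fintype n] [DecidableEq n]
    (d : n → ℝ) :
    (diagonal fun k => (√(1 + d k ^ 2))⁻¹) * (diagonal fun k => (√(1 + d k ^ 2))⁻¹)ᵀ =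
      (1 + diagonal d ^ 2)⁻¹ := by
  refine (inv_eq_left_inv ?_).symm
  rw [diagonal_transpose, diagonal_mul_diagonal, sq, diagonal_mul_diagonal, ← diagonal_one,
    diagonal_add, diagonal_mul_diagonal]
  congr 1; funext k
  have hpos : 0 < 1 + d k ^ 2 := by positivity
  rw [← mul_inv, ← sq, Real.sq_sqrt hpos.le, ← sq, inv_mul_cancel₀ hpos.ne']

end Matrix

/-- With the low-rank update setup, the posterior covariance
`Σ = Π − K S Kᵀ` (with `K = Π Cᵀ S⁻¹` the Kalman gain and `S = C Π Cᵀ + R`) satisfies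
`Σ = Π^{1/2} U (I + D²)⁻¹ Uᵀ Π^{*/2}`; moreover `Σ^{1/2} := Π^{1/2} U (I + D²)^{-1/2}`
is a square-root factor of `Σ`, which therefore has rank at most `r`. -/
theorem low_rank_posterior_covariance {n m r : ℕ}
    (Ph : Matrix (Fin n) (Fin r) ℝ) (C : Matrix (Fin m) (Fin n) ℝ)
    (Rh : Matrix (Fin m) (Fin m) ℝ)
    (U D : Matrix (Fin r) (Fin r) ℝ) (V : Matrix (Fin m) (Fin r) ℝ)
    (hRh : IsUnit Rh.det)
    (hU₁ : U * Uᵀ = 1) (hU₂ : Uᵀ * U = 1) (hD : D.IsDiag) (hV : Vᵀ * V = 1)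
    (hSVD : (Rh⁻¹ * C * Ph)ᵀ = U * D * Vᵀ) :
    let Pmat : Matrix (Fin n) (Fin n) ℝ := Ph * Phᵀ
    let S : Matrix (Fin m) (Fin m) ℝ := C * Pmat * Cᵀ + Rh * Rhᵀ
    let K : Matrix (Fin n) (Fin m) ℝ := Pmat * Cᵀ * S⁻¹
    let Sig : Matrix (Fin n) (Fin n) ℝ := Pmat - K * S * Kᵀ
    let Sighalf : Matrix (Fin n) (Fin r) ℝ :=
      Ph * U * Matrix.diagonal fun k => (Real.sqrt (1 + D k k ^ 2))⁻¹
    Sig = Ph * U * (1 + D ^ 2)⁻¹ * Uᵀ * Phᵀ ∧ Sighalf * Sighalfᵀ = Sig ∧ Sig.rank ≤ r := by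
  intro Pmat S K Sig Sighalf
  set B := Rh⁻¹ * C * Ph with hB
  have hCPh : C * Ph = Rh * B := by
    rw [hB, Matrix.mul_assoc, mul_nonsing_inv_cancel_left _ _ hRh]
  have hBtB : Bᵀ * B = U * D ^ 2 * Uᵀ := by
    calc Bᵀ * B = U * D * Vᵀ * (U * D * Vᵀ)ᵀ := by rw [← hSVD, transpose_transpose]
      _ = U * D ^ 2 * Uᵀ := by rw [svd_mul_transpose hV, hD.isSymm.eq, sq]
  have hSig : Sig = Ph * U * (1 + D ^ 2)⁻¹ * Uᵀ * Phᵀ := by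
    rw [show Sig = _ from
        kalman_posterior_cov_eq Ph C hRh (isUnit_one_add_mul_transpose_self B) hCPh,
      hBtB, inv_one_add_conj_orthogonal hU₁ hU₂]
    simp only [Matrix.mul_assoc]
  have hSighalf : Sighalf * Sighalfᵀ = Sig := by
    have hsqrt : (diagonal fun k => (√(1 + D k k ^ 2))⁻¹) *
        (diagonal fun k => (√(1 + D k k ^ 2))⁻¹)ᵀ = (1 + D ^ 2)⁻¹ := by
      simpa only [diag_apply, hD.diagonal_diag] using
        diagonal_inv_sqrt_one_add_sq_mul_transpose D.diag
    calc Sighalf * Sighalfᵀ = Ph * U * ((diagonal fun k => (√(1 + D k k ^ 2))⁻¹) *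
          (diagonal fun k => (√(1 + D k k ^ 2))⁻¹)ᵀ) * Uᵀ * Phᵀ := by
          simp only [Sighalf, transpose_mul, Matrix.mul_assoc]
      _ = Sig := by rw [hsqrt, hSig]
  refine ⟨hSig, hSighalf, ?_⟩
  rw [← hSighalf, rank_self_mul_transpose]
  exact rank_le_width Sighalf
end
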